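/- Let f(t) = log(1+t)/(1+t)^2 for t > e^2 - 1 and f(t) = 2/e^4 for 0 < t ≤ e^2 - 1, and let g(t) = 2/(1+t)^2 on (0,∞). Then for every t > 0, ∫_0^t f(s) ds ≤ ∫_0^t g(s) ds (i.e. f is Hardy–Littlewood majorised by g). -/

import Mathlib

open MeasureTheory Real

noncomputable def fEx (t : ℝ) : ℝ :=
  if t ≤ Real.exp 2 - 1 then 2 / Real.exp 4 else Real.log (1 + t) / (1 + t) ^ 2

noncomputable def gEx (t : ℝ) : ℝ := 2 / (1 + t) ^ 2

lemma exp_sq : Real.exp 2 ^ 2 = Real.exp 4 := by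
  rw [sq, ← Real.exp_add]; norm_num

lemma fEx_eq_log (s : ℝ) (hs : Real.exp 2 - 1 ≤ s) :
    fEx s = Real.log (1 + s) / (1 + s) ^ 2 := by
  unfold fEx
  rcases eq_or_lt_of_le hs with h | h
  · subst h
    simp only [le_refl, if_pos]
    rw [show (1 : ℝ) + (Real.exp 2 - 1) = Real.exp 2 by ring, exp_sq,
      Real.log_exp]
  · rw [if_neg (not_le.mpr h)]

-- antiderivative on the log region
lemma hasDeriv_F (s : ℝ) (hs : 0 < 1 + s) :
    HasDerivAt (fun x => -(Real.log (1 + x) + 1) / (1 + x))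
      (Real.log (1 + s) / (1 + s) ^ 2) s := by
  have h1 : HasDerivAt (fun x : ℝ => 1 + x) 1 s := by
    simpa using (hasDerivAt_id s).const_add 1
  have hne : (1 : ℝ) + s ≠ 0 := ne_of_gt hs
  have hlog : HasDerivAt (fun x => Real.log (1 + x)) (1 / (1 + s)) s := by
    simpa using (h1.log hne)
  have hnum : HasDerivAt (fun x => -(Real.log (1 + x) + 1)) (-(1 / (1 + s))) s := by
    exact (hlog.add_const 1).neg
  have := hnum.fun_div h1 hne
  refine this.congr_deriv ?_
  field_simp
  ring

lemma hasDeriv_G (s : ℝ) (hs : 0 < 1 + s) :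
    HasDerivAt (fun x => -2 / (1 + x)) (gEx s) s := by
  have h1 : HasDerivAt (fun x : ℝ => 1 + x) 1 s := by
    simpa using (hasDerivAt_id s).const_add 1
  have hne : (1 : ℝ) + s ≠ 0 := ne_of_gt hs
  have := (hasDerivAt_const s (-2 : ℝ)).fun_div h1 hne
  refine this.congr_deriv ?_
  unfold gEx
  field_simp
  ring

lemma contOn_log (a b : ℝ) (h : ∀ s ∈ Set.uIcc a b, 0 < 1 + s) :
    ContinuousOn (fun s => Real.log (1 + s) / (1 + s) ^ 2) (Set.uIcc a b) := by
  apply ContinuousOn.div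
  · exact (Real.continuousOn_log.comp (by fun_prop)
      (fun s hs => ne_of_gt (h s hs)))
  · fun_prop
  · exact fun s hs => pow_ne_zero _ (ne_of_gt (h s hs))

lemma integral_gEx (t : ℝ) (ht : 0 ≤ t) :
    ∫ s in (0:ℝ)..t, gEx s = 2 - 2 / (1 + t) := by
  have h : ∀ s ∈ Set.uIcc (0:ℝ) t, 0 < 1 + s := by
    intro s hs
    rw [Set.uIcc_of_le ht] at hs
    linarith [hs.1]
  have := intervalIntegral.integral_eq_sub_of_hasDerivAt
    (f := fun x => -2 / (1 + x)) (f' := gEx) (fun s hs => hasDeriv_G s (h s hs))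
    (by
      apply ContinuousOn.intervalIntegrable
      apply ContinuousOn.div continuousOn_const (by fun_prop)
      exact fun s hs => pow_ne_zero _ (ne_of_gt (h s hs)))
  rw [this]
  norm_num
  ring

lemma integral_fEx_const (t : ℝ) (h0 : 0 ≤ t) (ht : t ≤ Real.exp 2 - 1) :
    ∫ s in (0:ℝ)..t, fEx s = t * (2 / Real.exp 4) := by
  rw [intervalIntegral.integral_congr (g := fun _ => 2 / Real.exp 4)]
  · simp; ring
  · intro s hs
    rw [Set.uIcc_of_le h0] at hs
    unfold fEx
    rw [if_pos (le_trans hs.2 ht)]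

lemma integral_fEx_log (t : ℝ) (ht : Real.exp 2 - 1 ≤ t) :
    ∫ s in (Real.exp 2 - 1)..t, fEx s =
      3 / Real.exp 2 - (Real.log (1 + t) + 1) / (1 + t) := by
  have hE : (1:ℝ) < Real.exp 2 := by
    have := Real.add_one_le_exp (2:ℝ); linarith
  have hpos : ∀ s ∈ Set.uIcc (Real.exp 2 - 1) t, 0 < 1 + s := by
    intro s hs
    rw [Set.uIcc_of_le ht] at hs
    linarith [hs.1]
  have heq : Set.EqOn fEx (fun s => Real.log (1 + s) / (1 + s) ^ 2)
      (Set.uIcc (Real.exp 2 - 1) t) := by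
    intro s hs
    rw [Set.uIcc_of_le ht] at hs
    exact fEx_eq_log s hs.1
  rw [intervalIntegral.integral_congr heq]
  rw [intervalIntegral.integral_eq_sub_of_hasDerivAt
    (f := fun x => -(Real.log (1 + x) + 1) / (1 + x))
    (fun s hs => hasDeriv_F s (hpos s hs))
    ((contOn_log _ _ hpos).intervalIntegrable)]
  have h1 : (1:ℝ) + (Real.exp 2 - 1) = Real.exp 2 := by ring
  rw [h1, Real.log_exp]
  have hEne : Real.exp 2 ≠ 0 := (Real.exp_pos 2).ne'
  field_simp
  ring

theorem stmt0 : ∀ t : ℝ, 0 < t →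
    ∫ s in (0:ℝ)..t, fEx s ≤ ∫ s in (0:ℝ)..t, gEx s := by
  intro t ht
  have hE3 : (3:ℝ) ≤ Real.exp 2 := by
    have := Real.add_one_le_exp (2:ℝ); linarith
  have hE4 : (0:ℝ) < Real.exp 4 := Real.exp_pos 4
  have hut : (0:ℝ) < 1 + t := by linarith
  rw [integral_gEx t ht.le]
  rcases le_or_gt t (Real.exp 2 - 1) with hcase | hcase
  · rw [integral_fEx_const t ht.le hcase]
    have h1 : 1 + t ≤ Real.exp 4 := by
      rw [← exp_sq]; nlinarith
    have h2 : 2 - 2 / (1 + t) = 2 * t / (1 + t) := by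
      field_simp; ring
    rw [h2, show t * (2 / Real.exp 4) = 2 * t / Real.exp 4 by ring]
    exact div_le_div_of_nonneg_left (by linarith) hut h1
  · have hT : (0:ℝ) ≤ Real.exp 2 - 1 := by linarith
    have hadd : ∫ s in (0:ℝ)..t, fEx s =
        (∫ s in (0:ℝ)..(Real.exp 2 - 1), fEx s) +
          ∫ s in (Real.exp 2 - 1)..t, fEx s := by
      rw [intervalIntegral.integral_add_adjacent_intervals]
      · apply ContinuousOn.intervalIntegrable
        apply ContinuousOn.congr (continuousOn_const (c := 2 / Real.exp 4))
        intro s hs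
        rw [Set.uIcc_of_le hT] at hs
        unfold fEx
        rw [if_pos hs.2]
      · apply ContinuousOn.intervalIntegrable
        have hpos : ∀ s ∈ Set.uIcc (Real.exp 2 - 1) t, 0 < 1 + s := by
          intro s hs
          rw [Set.uIcc_of_le hcase.le] at hs
          linarith [hs.1]
        apply ContinuousOn.congr (contOn_log _ _ hpos)
        intro s hs
        rw [Set.uIcc_of_le hcase.le] at hs
        exact fEx_eq_log s hs.1
    rw [hadd, integral_fEx_const _ hT le_rfl, integral_fEx_log t hcase.le]
    have hL : (2:ℝ) ≤ Real.log (1 + t) := by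
      rw [show (2:ℝ) = Real.log (Real.exp 2) by rw [Real.log_exp]]
      apply Real.log_le_log (Real.exp_pos 2)
      linarith
    set L := Real.log (1 + t)
    have h1 : (1 - L) / (1 + t) ≤ 0 :=
      div_nonpos_of_nonpos_of_nonneg (by linarith) hut.le
    have h2 : (Real.exp 2 - 1) * (2 / Real.exp 4) + 3 / Real.exp 2 ≤ 2 := by
      rw [← exp_sq]
      have hEpos : (0:ℝ) < Real.exp 2 := Real.exp_pos 2
      rw [show (Real.exp 2 - 1) * (2 / Real.exp 2 ^ 2) + 3 / Real.exp 2
          = (5 * Real.exp 2 - 2) / Real.exp 2 ^ 2 by field_simp; ring]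
      rw [div_le_iff₀ (by positivity)]
      nlinarith
    have key2 : (L + 1) / (1 + t) = 2 / (1 + t) - (1 - L) / (1 + t) := by
      rw [div_sub_div_same]; ring_nf
    linarith [h1, h2]
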